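/- arXiv:1903.09352 — 3 statements merged into one kernel-verified Lean document; each statement's English description precedes it below -/
import Mathlib

section
/- Let A be a finite set of real numbers that is 2-regular, and let l ≥ 2 be an integer. Then A has a (1 + 1/l)-regular subset A' with |A'| ≥ |A| / (4l + 2). -/
open scoped Classical

/-- `a` and `b` are consecutive elements of the finite set `A` of reals. -/
def ConsecIn (A : Finset ℝ) (a b : ℝ) : Prop :=
  a ∈ A ∧ b ∈ A ∧ a < b ∧ ∀ c ∈ A, c ≤ a ∨ b ≤ c

/-- `A` is `L`-regular: some `X > 0` bounds all consecutive gaps between `X` and `L*X`. -/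
def IsRegularSet (L : ℝ) (A : Finset ℝ) : Prop :=
  ∃ X : ℝ, 0 < X ∧ ∀ a b : ℝ, ConsecIn A a b → X ≤ b - a ∧ b - a ≤ L * X

/-- `R_L(A)`: the maximum cardinality of an `L`-regular subset of `A`. -/
noncomputable def regMax (L : ℝ) (A : Finset ℝ) : ℕ :=
  (A.powerset.filter fun B => IsRegularSet L B).sup Finset.card

/-- `A` is `M`-covered: covered by consecutive intervals `[s + j*l, s + (j+1)*l)`,
each meeting `A` in at least `1` and at most `M` points. -/
def IsCovered (M : ℕ) (A : Finset ℝ) : Prop :=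
  ∃ (s l : ℝ) (k : ℕ), 0 < l ∧
    (∀ a ∈ A, ∃ j < k, s + j * l ≤ a ∧ a < s + (j + 1) * l) ∧
    ∀ j < k,
      1 ≤ (A.filter fun a => s + j * l ≤ a ∧ a < s + (j + 1) * l).card ∧
      (A.filter fun a => s + j * l ≤ a ∧ a < s + (j + 1) * l).card ≤ M

/-!
Let `X` be the scale of `A`, so consecutive gaps of `A` lie in `[X, 2X]`. Greedily pick points
of `A` from left to right, each time taking the first point at distance at least `2lX` from the
previous pick. Consecutive picks are then `2lX` to `2lX + 2X = (1 + 1/l) · 2lX` apart, and since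
`A` is `X`-separated each half-open window `[p, p + 2lX)` of a pick `p` holds at most `2l` points
of `A`, so at least `|A| / (2l)` points are picked.
-/

open Finset

def GapsIn (A : Finset ℝ) (lo hi : ℝ) : Prop :=
  ∀ a b, ConsecIn A a b → lo ≤ b - a ∧ b - a ≤ hi

lemma exists_consecIn_le {A : Finset ℝ} {x y : ℝ} (hx : x ∈ A) (hy : y ∈ A) (hxy : x < y) :
    ∃ c, ConsecIn A x c ∧ c ≤ y := by
  have hy' : y ∈ A.filter (x < ·) := mem_filter.2 ⟨hy, hxy⟩
  obtain ⟨hcA, hxc⟩ := mem_filter.1 ((A.filter (x < ·)).min'_mem ⟨y, hy'⟩)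
  refine ⟨_, ⟨hx, hcA, hxc, fun d hd => ?_⟩, min'_le _ _ hy'⟩
  rcases le_or_gt d x with h | h
  · exact Or.inl h
  · exact Or.inr (min'_le _ _ (mem_filter.2 ⟨hd, h⟩))

lemma exists_consecIn_ge {A : Finset ℝ} {x y : ℝ} (hx : x ∈ A) (hy : y ∈ A) (hxy : x < y) :
    ∃ c, ConsecIn A c y ∧ x ≤ c := by
  have hx' : x ∈ A.filter (· < y) := mem_filter.2 ⟨hx, hxy⟩
  obtain ⟨hcA, hcy⟩ := mem_filter.1 ((A.filter (· < y)).max'_mem ⟨x, hx'⟩)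
  refine ⟨_, ⟨hcA, hy, hcy, fun d hd => ?_⟩, le_max' _ _ hx'⟩
  rcases lt_or_ge d y with h | h
  · exact Or.inl (le_max' _ _ (mem_filter.2 ⟨hd, h⟩))
  · exact Or.inr h

lemma ConsecIn.of_filter_le {A : Finset ℝ} {t a b : ℝ}
    (h : ConsecIn (A.filter (t ≤ ·)) a b) : ConsecIn A a b := by
  obtain ⟨ha, hb, hab, hc⟩ := h
  rw [mem_filter] at ha hb
  refine ⟨ha.1, hb.1, hab, fun c hcA => ?_⟩
  by_cases htc : t ≤ c
  · exact hc c (mem_filter.2 ⟨hcA, htc⟩)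
  · exact Or.inl (by linarith [ha.2])

namespace GapsIn

variable {A : Finset ℝ} {lo hi : ℝ}

lemma le_sub (h : GapsIn A lo hi) {x y : ℝ} (hx : x ∈ A) (hy : y ∈ A) (hxy : x < y) :
    lo ≤ y - x := by
  obtain ⟨c, hc, hcy⟩ := exists_consecIn_le hx hy hxy
  linarith [(h x c hc).1]

lemma filter_le (h : GapsIn A lo hi) (t : ℝ) : GapsIn (A.filter (t ≤ ·)) lo hi :=
  fun a b hab => h a b hab.of_filter_le

lemma insert {S : Finset ℝ} (hS : GapsIn S lo hi) {p q : ℝ} (hq : q ∈ S)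
    (hq_min : ∀ s ∈ S, q ≤ s) (hpq : p < q) (hlo : lo ≤ q - p) (hhi : q - p ≤ hi) :
    GapsIn (insert p S) lo hi := by
  rintro a b ⟨ha, hb, hab, hc⟩
  rw [mem_insert] at ha hb
  rcases ha with rfl | ha
  · have hbS : b ∈ S := hb.resolve_left hab.ne'
    obtain rfl : b = q := le_antisymm
      ((hc q (mem_insert_of_mem hq)).resolve_left hpq.not_ge) (hq_min b hbS)
    exact ⟨hlo, hhi⟩
  · have hbS : b ∈ S := hb.resolve_left fun hbp => by linarith [hq_min a ha]
    exact hS a b ⟨ha, hbS, hab, fun c hcS => hc c (mem_insert_of_mem hcS)⟩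

lemma card_filter_Ico_le {X : ℝ} (hX : 0 < X) (h : GapsIn A X hi) (p : ℝ) (N : ℕ) :
    #(A.filter (· ∈ Set.Ico p (p + N * X))) ≤ N := by
  set B := A.filter (· ∈ Set.Ico p (p + N * X))
  have hB : ∀ x ∈ B, x ∈ A ∧ p ≤ x ∧ x < p + N * X := fun x hx => by
    simpa only [B, mem_filter, Set.mem_Ico] using hx
  -- Points of `B` are `X`-separated, so they fall in distinct cells `[p + kX, p + (k+1)X)`.
  have hmono : StrictMonoOn (fun x => ⌊(x - p) / X⌋₊) (B : Set ℝ) := by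
    intro x hx y hy hxy
    obtain ⟨hxA, hpx, -⟩ := hB x hx
    obtain ⟨hyA, -, -⟩ := hB y hy
    have hsep : (x - p) / X + 1 ≤ (y - p) / X := by
      rw [div_add_one hX.ne', div_le_div_iff_of_pos_right hX]
      linarith [h.le_sub hxA hyA hxy]
    calc ⌊(x - p) / X⌋₊ < ⌊(x - p) / X⌋₊ + 1 := Nat.lt_succ_self _
      _ = ⌊(x - p) / X + 1⌋₊ := (Nat.floor_add_one (by positivity)).symm
      _ ≤ ⌊(y - p) / X⌋₊ := Nat.floor_le_floor hsep
  have hmaps : ∀ x ∈ B, ⌊(x - p) / X⌋₊ ∈ range N := fun x hx => by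
    obtain ⟨-, hpx, hxN⟩ := hB x hx
    rw [mem_range, Nat.floor_lt (by positivity), div_lt_iff₀ hX]
    linarith
  simpa using card_le_card_of_injOn _ hmaps hmono.injOn

lemma sub_le_of_isLeast {D : ℝ} (h : GapsIn A lo hi) {p q : ℝ} (hp : p ∈ A)
    (hq : IsLeast {x | x ∈ A ∧ p + D ≤ x} q) (hpq : p < q) : q - p ≤ D + hi := by
  obtain ⟨⟨hqA, -⟩, hq_min⟩ := hq
  obtain ⟨c, hc, hpc⟩ := exists_consecIn_ge hp hqA hpq
  have hcD : c < p + D := lt_of_not_ge fun hc' => (hc.2.2.1).not_ge (hq_min ⟨hc.1, hc'⟩)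
  linarith [(h c q hc).2]

theorem exists_subset_card_le {X : ℝ} (hX : 0 < X) (h : GapsIn A X hi) {N : ℕ} (hN : 0 < N)
    (hne : A.Nonempty) :
    ∃ S ⊆ A, A.min' hne ∈ S ∧ GapsIn S (N * X) (N * X + hi) ∧ #A ≤ N * #S := by
  induction A using Finset.strongInduction with
  | H A ih =>
  set p := A.min' hne
  have hpA : p ∈ A := A.min'_mem hne
  have hD : 0 < (N : ℝ) * X := by positivity
  set A' := A.filter (p + N * X ≤ ·)
  have hpA' : p ∉ A' := fun hp => by linarith [(mem_filter.1 hp).2]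
  have hnear : #(A.filter fun x => ¬ p + N * X ≤ x) ≤ N :=
    (card_le_card fun x hx => by
      simp only [mem_filter, not_le, Set.mem_Ico] at hx ⊢
      exact ⟨hx.1, A.min'_le x hx.1, hx.2⟩).trans (h.card_filter_Ico_le hX p N)
  rcases A'.eq_empty_or_nonempty with hA' | hA'
  · refine ⟨{p}, singleton_subset_iff.2 hpA, mem_singleton_self p,
      fun a b hab => absurd (hab.2.2.1) ?_, ?_⟩
    · rw [mem_singleton.1 hab.1, mem_singleton.1 hab.2.1]
      exact lt_irrefl p
    · rw [← card_filter_add_card_filter_not (p + N * X ≤ ·)]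
      simpa [A', hA'] using hnear
  · obtain ⟨S', hS'A', hqS', hS', hcard'⟩ :=
      ih A' (filter_ssubset.2 ⟨p, hpA, not_le.2 (by linarith)⟩) (h.filter_le _) hA'
    set q := A'.min' hA'
    have hqA' : q ∈ A' := A'.min'_mem hA'
    have hpq : p + N * X ≤ q := (mem_filter.1 hqA').2
    refine ⟨Insert.insert p S', insert_subset hpA (hS'A'.trans (filter_subset _ _)),
      mem_insert_self p S', ?_, ?_⟩
    · refine hS'.insert hqS' (fun s hs => A'.min'_le s (hS'A' hs)) (by linarith)
        (by linarith) (h.sub_le_of_isLeast hpA ?_ (by linarith))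
      exact ⟨mem_filter.1 hqA', fun x hx => A'.min'_le x (mem_filter.2 hx)⟩
    · rw [card_insert_of_notMem fun hp => hpA' (hS'A' hp),
        ← card_filter_add_card_filter_not (p + N * X ≤ ·)]
      linarith

end GapsIn

/-- If `A` is `2`-regular and `l ≥ 2` is an integer, then `A` has a
`(1 + 1/l)`-regular subset `A'` with `|A'| ≥ |A| / (4l + 2)`. -/
theorem stmt0 (A : Finset ℝ) (hA : IsRegularSet 2 A) (l : ℕ) (hl : 2 ≤ l) :
    ∃ A' ⊆ A, IsRegularSet (1 + 1 / (l : ℝ)) A' ∧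
      (A.card : ℝ) / (4 * l + 2) ≤ (A'.card : ℝ) := by
  obtain ⟨X, hX, hgaps⟩ := hA
  rcases A.eq_empty_or_nonempty with rfl | hne
  · exact ⟨∅, empty_subset _, ⟨1, one_pos, fun a b h => absurd h.1 (notMem_empty a)⟩, by simp⟩
  have hl0 : (0 : ℝ) < l := by exact_mod_cast (by omega : 0 < l)
  obtain ⟨S, hSA, -, hS, hcard⟩ :=
    GapsIn.exists_subset_card_le (N := 2 * l) hX hgaps (by omega) hne
  refine ⟨S, hSA, ⟨2 * l * X, by positivity, fun a b hab => ?_⟩, ?_⟩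
  · have hscale : (1 + 1 / (l : ℝ)) * (2 * l * X) = 2 * l * X + 2 * X := by
      field_simp
    push_cast at hS
    rw [hscale]
    exact hS a b hab
  · have hcard' : (#A : ℝ) ≤ 2 * l * #S := by exact_mod_cast hcard
    rw [div_le_iff₀ (by positivity)]
    nlinarith
end

section
/- Let A be a finite set of real numbers which admits an M-covering for some positive integer M ≤ |A|. Then R_2(A) ≥ |A| / (3M). -/
open scoped Classical

/-!
Choose one point of `A` in every third interval of the covering. Two consecutive chosen points
lie in intervals `3i` and `3i + 3`, so their distance lies between `2l` and `4l`: they form a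
`2`-regular set. There are `⌈k/3⌉` of them, while `|A| ≤ kM`.
-/

open Finset

lemma le_regMax {L : ℝ} {A B : Finset ℝ} (hBA : B ⊆ A) (hB : IsRegularSet L B) :
    B.card ≤ regMax L A :=
  le_sup (f := card) (mem_filter.mpr ⟨mem_powerset.mpr hBA, hB⟩)

section GapSequence

variable {L X : ℝ} {f : ℕ → ℝ} {m : ℕ}

lemma strictMonoOn_Iio_of_le_sub (hX : 0 < X) (hgap : ∀ i, i + 1 < m → X ≤ f (i + 1) - f i) :
    StrictMonoOn f (Set.Iio m) := by
  refine (strictMonoOn_Iic_of_lt_succ (n := m - 1) fun i hi => ?_).mono fun i hi => ?_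
  · have := hgap i (by omega)
    rw [Order.succ_eq_add_one]
    linarith
  · simp only [Set.mem_Iio, Set.mem_Iic] at hi ⊢
    omega

lemma card_image_range_of_le_sub (hX : 0 < X) (hgap : ∀ i, i + 1 < m → X ≤ f (i + 1) - f i) :
    ((range m).image f).card = m := by
  rw [card_image_of_injOn, card_range]
  simpa only [coe_range] using (strictMonoOn_Iio_of_le_sub hX hgap).injOn

lemma isRegularSet_image_range (hX : 0 < X)
    (hgap : ∀ i, i + 1 < m → X ≤ f (i + 1) - f i ∧ f (i + 1) - f i ≤ L * X) :
    IsRegularSet L ((range m).image f) := by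
  have hmono := strictMonoOn_Iio_of_le_sub hX fun i hi => (hgap i hi).1
  refine ⟨X, hX, ?_⟩
  rintro _ _ ⟨ha, hb, hab, hbetween⟩
  obtain ⟨i, hi, rfl⟩ := mem_image.mp ha
  obtain ⟨j, hj, rfl⟩ := mem_image.mp hb
  rw [mem_range] at hi hj
  have hij : i < j := (hmono.lt_iff_lt hi hj).mp hab
  obtain rfl : j = i + 1 := by
    by_contra hne
    have hsucc : i + 1 < m := by omega
    rcases hbetween (f (i + 1)) (mem_image_of_mem f (mem_range.mpr hsucc)) with h | h
    · exact h.not_gt (hmono hi hsucc (Nat.lt_succ_self i))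
    · exact h.not_gt (hmono hsucc hj (by omega))
  exact hgap i hj

end GapSequence

lemma card_le_mul_of_forall_exists_mem {α : Type*} {A : Finset α} {S : ℕ → Finset α} {k M : ℕ}
    (hcover : ∀ a ∈ A, ∃ j < k, a ∈ S j) (hS : ∀ j < k, (S j).card ≤ M) : A.card ≤ k * M := calc
  A.card ≤ ((range k).biUnion S).card := card_le_card fun a ha => by
    obtain ⟨j, hj, hja⟩ := hcover a ha
    exact mem_biUnion.mpr ⟨j, mem_range.mpr hj, hja⟩
  _ ≤ k * M := by
    simpa only [card_range] using
      card_biUnion_le_card_mul _ S M fun j hj => hS j (mem_range.mp hj)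

lemma sub_mem_Icc_of_third_apart {s l : ℝ} {p : ℕ → ℝ} {k : ℕ}
    (hp : ∀ j < k, s + j * l ≤ p j ∧ p j < s + (j + 1) * l) {i : ℕ} (hi : 3 * (i + 1) < k) :
    p (3 * (i + 1)) - p (3 * i) ∈ Set.Icc (2 * l) (2 * (2 * l)) := by
  obtain ⟨ha, ha'⟩ := hp (3 * i) (by omega)
  obtain ⟨hb, hb'⟩ := hp (3 * (i + 1)) hi
  push_cast at ha ha' hb hb'
  constructor <;> linarith

theorem stmt1_general (A : Finset ℝ) (M : ℕ)
    (hcov : IsCovered M A) :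
    (A.card : ℝ) / (3 * M) ≤ (regMax 2 A : ℝ) := by
  obtain ⟨s, l, k, hl, hcover, hcount⟩ := hcov
  have hA : A.card ≤ k * M :=
    card_le_mul_of_forall_exists_mem
      (fun a ha => (hcover a ha).imp fun _ ⟨hj, hja⟩ => ⟨hj, mem_filter.mpr ⟨ha, hja⟩⟩)
      fun j hj => (hcount j hj).2
  choose! p hpS using fun j (hj : j < k) => card_pos.mp (hcount j hj).1
  set m := (k + 2) / 3
  have hgap : ∀ i, i + 1 < m → 2 * l ≤ p (3 * (i + 1)) - p (3 * i) ∧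
      p (3 * (i + 1)) - p (3 * i) ≤ 2 * (2 * l) := fun i hi =>
    sub_mem_Icc_of_third_apart (fun j hj => (mem_filter.mp (hpS j hj)).2) (by omega)
  have hsub : (range m).image (fun i => p (3 * i)) ⊆ A := fun a ha => by
    obtain ⟨i, hi, rfl⟩ := mem_image.mp ha
    exact (mem_filter.mp (hpS _ (by rw [mem_range] at hi; omega))).1
  have hm : m ≤ regMax 2 A := by
    have := le_regMax hsub (isRegularSet_image_range (by positivity) hgap)
    rwa [card_image_range_of_le_sub (by positivity) fun i hi => (hgap i hi).1] at this
  refine div_le_of_le_mul₀ (by positivity) (by positivity) ?_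
  exact_mod_cast calc
    A.card ≤ k * M := hA
    _ ≤ m * (3 * M) := by rw [← mul_assoc]; exact Nat.mul_le_mul_right M (by omega)
    _ ≤ regMax 2 A * (3 * M) := Nat.mul_le_mul_right _ hm

/-- If `A` admits an `M`-covering for some positive integer `M ≤ |A|`,
then `R_2(A) ≥ |A| / (3M)`. -/
theorem stmt1 (A : Finset ℝ) (M : ℕ) (hM : 0 < M) (hMA : M ≤ A.card)
    (hcov : IsCovered M A) :
    (A.card : ℝ) / (3 * M) ≤ (regMax 2 A : ℝ) :=
  stmt1_general A M hcov
end

section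
/- If a finite set A of real numbers is L-regular (for some real L ≥ 1), then A can be ⌈L⌉-covered. -/
open scoped Classical

/-! Cut the line into consecutive windows of length `L * X` starting at `min A`. Distinct points
of `A` are at least `X` apart, so a window holds at most `⌈L⌉` of them; consecutive points are at
most `L * X` apart, so no window between `min A` and `max A` is skipped. -/

lemma mem_Ico_add_floor_div_mul {s x l : ℝ} (hl : 0 < l) (hsx : s ≤ x) :
    s + ⌊(x - s) / l⌋₊ * l ≤ x ∧ x < s + (⌊(x - s) / l⌋₊ + 1) * l := by
  have h0 : 0 ≤ (x - s) / l := div_nonneg (sub_nonneg.2 hsx) hl.le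
  have hle := (le_div_iff₀ hl).1 (Nat.floor_le h0)
  have hlt := (div_lt_iff₀ hl).1 (Nat.lt_floor_add_one ((x - s) / l))
  constructor <;> linarith

lemma card_le_ceil_of_separated {B : Finset ℝ} {X L c : ℝ} (hX : 0 < X)
    (hsep : ∀ a ∈ B, ∀ b ∈ B, a < b → X ≤ b - a) (hB : ∀ a ∈ B, c ≤ a ∧ a < c + L * X) :
    B.card ≤ ⌈L⌉₊ := by
  have hidx a (ha : a ∈ B) := mem_Ico_add_floor_div_mul hX (hB a ha).1
  calc B.card ≤ (Finset.range ⌈L⌉₊).card :=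
        Finset.card_le_card_of_injOn (fun a => ⌊(a - c) / X⌋₊) ?_ ?_
    _ = ⌈L⌉₊ := Finset.card_range _
  · intro a ha
    have h0 : 0 ≤ (a - c) / X := div_nonneg (sub_nonneg.2 (hB a ha).1) hX.le
    have hL : (a - c) / X < L := by rw [div_lt_iff₀ hX]; linarith [(hB a ha).2]
    simpa using Nat.floor_lt_ceil_of_lt_of_pos hL (h0.trans_lt hL)
  · intro a ha b hb hab
    simp only at hab
    have ha' := hidx a ha
    have hb' := hidx b hb
    rw [hab] at ha'
    by_contra hne
    rcases lt_or_gt_of_ne hne with h | h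
    · linarith [hsep a ha b hb h]
    · linarith [hsep b hb a ha h]

section ConsecIn

variable {A : Finset ℝ}

lemma exists_le_consecIn_of_lt {a b : ℝ} (ha : a ∈ A) (hb : b ∈ A) (hab : a < b) :
    ∃ p, a ≤ p ∧ ConsecIn A p b := by
  set S := A.filter (· < b)
  have hS : S.Nonempty := ⟨a, by simp [S, ha, hab]⟩
  obtain ⟨hpA, hpb⟩ := Finset.mem_filter.1 (S.max'_mem hS)
  refine ⟨_, S.le_max' a (by simp [S, ha, hab]), hpA, hb, hpb, fun c hc => ?_⟩
  rcases lt_or_ge c b with hcb | hbc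
  · exact Or.inl (S.le_max' c (by simp [S, hc, hcb]))
  · exact Or.inr hbc

lemma le_sub_of_forall_consecIn_le {X a b : ℝ} (hgap : ∀ p q, ConsecIn A p q → X ≤ q - p)
    (ha : a ∈ A) (hb : b ∈ A) (hab : a < b) : X ≤ b - a := by
  obtain ⟨p, hap, hp⟩ := exists_le_consecIn_of_lt ha hb hab
  linarith [hgap p b hp]

lemma exists_mem_Ico_of_forall_consecIn_le {l t a b : ℝ} (hl : 0 < l)
    (hgap : ∀ p q, ConsecIn A p q → q - p ≤ l) (ha : a ∈ A) (hat : a ≤ t) (hb : b ∈ A)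
    (htb : t ≤ b) : ∃ c ∈ A, t ≤ c ∧ c < t + l := by
  rcases hat.lt_or_eq with hat | rfl
  · set S := A.filter (t ≤ ·)
    have hS : S.Nonempty := ⟨b, by simp [S, hb, htb]⟩
    obtain ⟨hcA, htc⟩ := Finset.mem_filter.1 (S.min'_mem hS)
    obtain ⟨p, -, hp⟩ := exists_le_consecIn_of_lt ha hcA (hat.trans_le htc)
    have hpt : p < t := by
      by_contra! htp
      exact hp.2.2.1.not_ge (S.min'_le p (by simp [S, hp.1, htp]))
    exact ⟨_, hcA, htc, by linarith [hgap _ _ hp]⟩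
  · exact ⟨a, ha, le_rfl, lt_add_of_pos_right a hl⟩

end ConsecIn

/-- If `A` is `L`-regular for some real `L ≥ 1`, then `A` can be `⌈L⌉`-covered. -/
theorem stmt2 (A : Finset ℝ) (L : ℝ) (hL : 1 ≤ L) (h : IsRegularSet L A) :
    IsCovered ⌈L⌉₊ A := by
  obtain ⟨X, hX, hgap⟩ := h
  rcases A.eq_empty_or_nonempty with rfl | hA
  · exact ⟨0, 1, 0, one_pos, by simp, by simp⟩
  set m := A.min' hA
  set M := A.max' hA
  have hl : 0 < L * X := mul_pos (by linarith) hX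
  refine ⟨m, L * X, ⌊(M - m) / (L * X)⌋₊ + 1, hl, fun a ha => ?_, fun j hj => ⟨?_, ?_⟩⟩
  · refine ⟨_, Nat.lt_succ_of_le (Nat.floor_le_floor ?_),
      mem_Ico_add_floor_div_mul hl (A.min'_le a ha)⟩
    gcongr
    exact A.le_max' a ha
  · have hjM : m + j * (L * X) ≤ M := by
      have h0 : 0 ≤ (M - m) / (L * X) := div_nonneg (sub_nonneg.2 (A.min'_le_max' hA)) hl.le
      have := (le_div_iff₀ hl).1 ((Nat.le_floor_iff h0).1 (Nat.lt_succ_iff.1 hj))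
      linarith
    obtain ⟨c, hc, hjc, hcj⟩ := exists_mem_Ico_of_forall_consecIn_le hl
      (fun p q hpq => (hgap p q hpq).2) (A.min'_mem hA) (le_add_of_nonneg_right (by positivity))
      (A.max'_mem hA) hjM
    exact Finset.card_pos.2 ⟨c, Finset.mem_filter.2 ⟨hc, hjc, by linarith⟩⟩
  · refine card_le_ceil_of_separated (c := m + j * (L * X)) hX (fun a ha b hb => ?_)
      (fun a ha => ?_)
    · exact le_sub_of_forall_consecIn_le (fun p q hpq => (hgap p q hpq).1)
        (Finset.mem_filter.1 ha).1 (Finset.mem_filter.1 hb).1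
    · obtain ⟨-, hja, haj⟩ := Finset.mem_filter.1 ha
      exact ⟨hja, by linarith⟩
end
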